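/- Let p(z) be a polynomial of degree n having all its zeros on the circle |z| = K with 0 < K ≤ 1. Then for every R ≥ 1, max_{|z|=R} |p(z)| ≤ [(K^{n-1}(1+K) + (R^n − 1)) / (K^{n-1} + K^n)] · max_{|z|=1} |p(z)|. -/

import Mathlib

noncomputable def polyMax (p : Polynomial ℂ) (r : ℝ) : ℝ :=
  ⨆ z : Metric.sphere (0 : ℂ) r, ‖p.eval (z : ℂ)‖

/-!
Write `M` for the maximum of `|p|` on the unit circle. Integrating `p'` along the ray from
`z / |z|` to `z` and using `|p'(tz)| ≤ t^(n-1) max_{|z|=1} |p'|` (maximum modulus for the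
reversed polynomial) gives `max_{|z|=R} |p| ≤ M + (R^n - 1)/n · max_{|z|=1} |p'|`, so everything
rests on the bound `|p'| ≤ n M / (K^(n-1) (1 + K))` on the unit circle. It is the product of three
estimates:
* `max_{|z|=K} |p| ≤ 2K/(1+K) · M`, since every zero `r` satisfies `|Kw - r| ≤ 2K/(1+K) |w - r|`
  for `|w| = 1`;
* Lax's inequality `max_{|z|=K} |p'| ≤ n/(2K) · max_{|z|=K} |p|` for zeros on the circle `|z| = K`;
* `max_{|z|=1} |p'| ≤ K^(1-n) max_{|z|=K} |p'|`, again by maximum modulus.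

For Lax's inequality (rescaled to `K = 1`) one uses `|nP(w) - wP'(w)|² = |wP'(w)|² -
n |P(w)|² Σ_r (|w|² - |r|²)/|w - r|²`: it gives equality `|nP - wP'| = |P'|` on the unit circle
for `P`, and `≤` for `P + γ z^n`, `|γ| > M`, whose zeros lie in the open disc. The `γ z^n` term
cancels in `nP - wP'`, so `|P'(w)| ≤ |P'(w) + nγw^(n-1)|` for all such `γ`; choosing `γ` against
`P'(w)` contradicts `|P'(w)| > nM/2`.
-/

open Polynomial Complex ComplexConjugate

theorem bddAbove_range_norm_eval_sphere (p : ℂ[X]) (r : ℝ) :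
    BddAbove (Set.range fun z : Metric.sphere (0 : ℂ) r => ‖p.eval (z : ℂ)‖) := by
  simpa only [Set.image_eq_range] using ((isCompact_sphere (0 : ℂ) r).image_of_continuousOn
    p.continuous.norm.continuousOn).bddAbove

theorem norm_eval_le_polyMax (p : ℂ[X]) {r : ℝ} {z : ℂ} (hz : ‖z‖ = r) :
    ‖p.eval z‖ ≤ polyMax p r :=
  le_ciSup (bddAbove_range_norm_eval_sphere p r) ⟨z, mem_sphere_zero_iff_norm.mpr hz⟩

theorem polyMax_le (p : ℂ[X]) {r B : ℝ} (hr : 0 ≤ r) (h : ∀ z : ℂ, ‖z‖ = r → ‖p.eval z‖ ≤ B) :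
    polyMax p r ≤ B :=
  have : Nonempty (Metric.sphere (0 : ℂ) r) := (NormedSpace.sphere_nonempty.mpr hr).to_subtype
  ciSup_le fun z => h z (mem_sphere_zero_iff_norm.mp z.2)

theorem polyMax_comp_C_mul_X_le (p : ℂ[X]) {a : ℝ} (ha : 0 ≤ a) :
    polyMax (p.comp (C (a : ℂ) * X)) 1 ≤ polyMax p a :=
  polyMax_le _ zero_le_one fun z hz => by
    simpa using norm_eval_le_polyMax p (z := a * z) (by simp [hz, abs_of_nonneg ha])

theorem eval_reflect_inv_mul_pow {f : ℂ[X]} {m : ℕ} (hf : f.natDegree ≤ m) {z : ℂ} (hz : z ≠ 0) :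
    (f.reflect m).eval z⁻¹ * z ^ m = f.eval z := by
  let := invertibleOfNonzero hz
  simpa only [invOf_eq_inv, eval₂_eq_eval_map, Polynomial.map_id] using
    eval₂_reflect_mul_pow (RingHom.id ℂ) z m f hf

theorem norm_eval_reflect_le_polyMax {f : ℂ[X]} {m : ℕ} (hf : f.natDegree ≤ m) {w : ℂ}
    (hw : ‖w‖ ≤ 1) : ‖(f.reflect m).eval w‖ ≤ polyMax f 1 := by
  refine norm_le_of_forall_mem_frontier_norm_le Metric.isBounded_ball
    (f.reflect m).differentiable.diffContOnCl (fun v hv => ?_)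
    (by rwa [closure_ball _ one_ne_zero, mem_closedBall_zero_iff])
  rw [frontier_ball _ one_ne_zero, mem_sphere_zero_iff_norm] at hv
  have hv0 : v⁻¹ ≠ 0 := inv_ne_zero (norm_ne_zero_iff.mp (hv ▸ one_ne_zero))
  calc ‖(f.reflect m).eval v‖ = ‖f.eval v⁻¹‖ := by
        rw [← eval_reflect_inv_mul_pow hf hv0, inv_inv, norm_mul, norm_pow, norm_inv, hv]
        simp
    _ ≤ polyMax f 1 := norm_eval_le_polyMax f (by rw [norm_inv, hv, inv_one])

theorem norm_coeff_le_polyMax {f : ℂ[X]} {m : ℕ} (hf : f.natDegree ≤ m) :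
    ‖f.coeff m‖ ≤ polyMax f 1 := by
  simpa [← coeff_zero_eq_eval_zero, coeff_reflect] using
    norm_eval_reflect_le_polyMax hf (w := 0) (by simp)

theorem norm_eval_le_pow_mul_polyMax_one {f : ℂ[X]} {m : ℕ} (hf : f.natDegree ≤ m) {z : ℂ}
    (hz : 1 ≤ ‖z‖) : ‖f.eval z‖ ≤ ‖z‖ ^ m * polyMax f 1 := by
  rw [← eval_reflect_inv_mul_pow hf (norm_pos_iff.mp (one_pos.trans_le hz)), norm_mul, norm_pow,
    mul_comm]
  gcongr
  exact norm_eval_reflect_le_polyMax hf (by rw [norm_inv]; exact inv_le_one_of_one_le₀ hz)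

theorem norm_eval_le_pow_mul_polyMax {f : ℂ[X]} {m : ℕ} (hf : f.natDegree ≤ m) {a : ℝ} (ha : 0 < a)
    {z : ℂ} (hz : a ≤ ‖z‖) : ‖f.eval z‖ ≤ (‖z‖ / a) ^ m * polyMax f a := by
  have ha' : (a : ℂ) ≠ 0 := by exact_mod_cast ha.ne'
  have hdeg : (f.comp (C (a : ℂ) * X)).natDegree ≤ m := by
    rwa [natDegree_comp, natDegree_C_mul_X _ ha', mul_one]
  have hza : ‖z / a‖ = ‖z‖ / a := by simp [abs_of_pos ha]
  calc ‖f.eval z‖ = ‖(f.comp (C (a : ℂ) * X)).eval (z / a)‖ := by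
        simp [mul_div_cancel₀ _ ha']
    _ ≤ (‖z‖ / a) ^ m * polyMax (f.comp (C (a : ℂ) * X)) 1 := by
        rw [← hza]
        exact norm_eval_le_pow_mul_polyMax_one hdeg (by rwa [hza, le_div_iff₀ ha, one_mul])
    _ ≤ (‖z‖ / a) ^ m * polyMax f a := by
        gcongr
        exact polyMax_comp_C_mul_X_le f ha.le

theorem norm_eval_le_pow_mul_norm_eval (p : ℂ[X]) {x y : ℂ} {c : ℝ}
    (h : ∀ r ∈ p.roots, ‖x - r‖ ≤ c * ‖y - r‖) :
    ‖p.eval x‖ ≤ c ^ p.natDegree * ‖p.eval y‖ := by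
  have hp := IsAlgClosed.splits p
  have hnorm (z : ℂ) : ‖(p.roots.map (z - ·)).prod‖ = (p.roots.map fun r => ‖z - r‖).prod := by
    rw [← normHom_apply, map_multiset_prod, Multiset.map_map]; rfl
  rw [hp.eval_eq_prod_roots, hp.eval_eq_prod_roots, norm_mul, norm_mul, mul_left_comm,
    ← IsAlgClosed.card_roots_eq_natDegree (k := ℂ), hnorm, hnorm]
  gcongr
  calc (p.roots.map fun r => ‖x - r‖).prod ≤ (p.roots.map fun r => c * ‖y - r‖).prod :=
        Multiset.prod_map_le_prod_map₀ _ _ (fun _ _ => norm_nonneg _) h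
    _ = c ^ Multiset.card p.roots * (p.roots.map fun r => ‖y - r‖).prod := by
        rw [Multiset.prod_map_mul, Multiset.map_const', Multiset.prod_replicate]

theorem norm_ofReal_mul_sub_le {K : ℝ} (hK0 : 0 ≤ K) {w r : ℂ} (hw : ‖w‖ = 1) (hr : ‖r‖ = K) :
    ‖K * w - r‖ ≤ 2 * K / (1 + K) * ‖w - r‖ := by
  set t := (w * conj r).re
  have ht : -K ≤ t := by
    have := (abs_le.mp (abs_re_le_norm (w * conj r))).1
    rwa [norm_mul, RCLike.norm_conj, hw, hr, one_mul] at this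
  rw [← sq_le_sq₀ (norm_nonneg _) (by positivity), mul_pow, Complex.sq_norm, Complex.sq_norm,
    normSq_sub, normSq_sub, mul_assoc, re_ofReal_mul, normSq_mul, normSq_ofReal,
    ← Complex.sq_norm, ← Complex.sq_norm, hw, hr, div_pow, div_mul_eq_mul_div,
    le_div_iff₀ (by positivity)]
  nlinarith [mul_nonneg (mul_nonneg hK0 (sq_nonneg (1 - K))) (neg_le_iff_add_nonneg.mp ht)]

theorem polyMax_le_two_mul_div_one_add_mul_polyMax_one (p : ℂ[X]) (hp : 0 < p.natDegree) {K : ℝ}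
    (hK0 : 0 < K) (hK1 : K ≤ 1) (hroots : ∀ z : ℂ, p.eval z = 0 → ‖z‖ = K) :
    polyMax p K ≤ 2 * K / (1 + K) * polyMax p 1 := by
  have hc : 0 ≤ 2 * K / (1 + K) := by positivity
  have hc1 : 2 * K / (1 + K) ≤ 1 := by rw [div_le_one (by positivity)]; linarith
  refine polyMax_le p hK0.le fun z hz => ?_
  have hw : ‖z / K‖ = 1 := by simp [hz, abs_of_pos hK0, hK0.ne']
  have hzw : z = K * (z / K) := (mul_div_cancel₀ z (by exact_mod_cast hK0.ne')).symm
  calc ‖p.eval z‖ ≤ (2 * K / (1 + K)) ^ p.natDegree * ‖p.eval (z / K)‖ := by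
        conv_lhs => rw [hzw]
        exact norm_eval_le_pow_mul_norm_eval p fun r hr =>
          norm_ofReal_mul_sub_le hK0.le hw (hroots r (isRoot_of_mem_roots hr))
    _ ≤ 2 * K / (1 + K) * polyMax p 1 := by
        gcongr
        · exact pow_le_of_le_one hc hc1 hp.ne'
        · exact norm_eval_le_polyMax p hw

theorem two_mul_re_div_sub {w r : ℂ} (h : w ≠ r) :
    2 * (w / (w - r)).re = 1 + (‖w‖ ^ 2 - ‖r‖ ^ 2) / ‖w - r‖ ^ 2 := by
  have hd : normSq (w - r) ≠ 0 := normSq_eq_zero.not.mpr (sub_ne_zero.mpr h)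
  simp only [Complex.sq_norm, div_re]
  field_simp
  simp only [normSq_apply, sub_re, sub_im]
  ring

theorem two_mul_re_sum_div_sub_roots (F : ℂ[X]) {w : ℂ} (hw : F.eval w ≠ 0) :
    2 * (F.roots.map fun r => w / (w - r)).sum.re =
      F.natDegree + (F.roots.map fun r => (‖w‖ ^ 2 - ‖r‖ ^ 2) / ‖w - r‖ ^ 2).sum := by
  have hre := map_multiset_sum Complex.reAddGroupHom (F.roots.map fun r => w / (w - r))
  simp only [Multiset.map_map, Function.comp_def, Complex.reAddGroupHom, AddMonoidHom.coe_mk,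
    ZeroHom.coe_mk] at hre
  rw [hre, ← Multiset.sum_map_mul_left, Multiset.map_congr rfl fun r hr =>
    two_mul_re_div_sub fun h => hw (by subst h; exact isRoot_of_mem_roots hr), Multiset.sum_map_add,
    Multiset.map_const', Multiset.sum_replicate, IsAlgClosed.card_roots_eq_natDegree, nsmul_one]

theorem norm_natDegree_mul_eval_sub_sq (F : ℂ[X]) {w : ℂ} (hw : F.eval w ≠ 0) :
    ‖(F.natDegree : ℂ) * F.eval w - w * F.derivative.eval w‖ ^ 2 =
      ‖w * F.derivative.eval w‖ ^ 2 - F.natDegree * ‖F.eval w‖ ^ 2 *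
        (F.roots.map fun r => (‖w‖ ^ 2 - ‖r‖ ^ 2) / ‖w - r‖ ^ 2).sum := by
  set S := (F.roots.map fun r => w / (w - r)).sum
  have hS : w * F.derivative.eval w = F.eval w * S := by
    rw [(IsAlgClosed.splits F).eval_derivative_eq_eval_mul_sum hw, mul_left_comm,
      ← Multiset.sum_map_mul_left]
    simp only [mul_one_div, S]
  have hS' : (F.natDegree : ℂ) * F.eval w - w * F.derivative.eval w =
      F.eval w * (F.natDegree - S) := by
    rw [hS]; ring
  rw [eq_sub_of_add_eq' (two_mul_re_sum_div_sub_roots F hw).symm, hS', hS, norm_mul, norm_mul,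
    mul_pow, mul_pow]
  simp only [Complex.sq_norm, normSq_apply, sub_re, sub_im, natCast_re, natCast_im]
  ring

theorem norm_natDegree_mul_eval_sub_le (F : ℂ[X]) {w : ℂ} (hroots : ∀ r ∈ F.roots, ‖r‖ ≤ ‖w‖)
    (hw : F.eval w ≠ 0) :
    ‖(F.natDegree : ℂ) * F.eval w - w * F.derivative.eval w‖ ≤ ‖w * F.derivative.eval w‖ := by
  rw [← sq_le_sq₀ (norm_nonneg _) (norm_nonneg _), norm_natDegree_mul_eval_sub_sq F hw,
    sub_le_self_iff]
  refine mul_nonneg (by positivity) (Multiset.sum_nonneg fun x hx => ?_)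
  obtain ⟨r, hr, rfl⟩ := Multiset.mem_map.mp hx
  have := pow_le_pow_left₀ (norm_nonneg r) (hroots r hr) 2
  exact div_nonneg (sub_nonneg.mpr this) (sq_nonneg _)

theorem norm_natDegree_mul_eval_sub_eq (F : ℂ[X]) {w : ℂ} (hroots : ∀ r ∈ F.roots, ‖r‖ = ‖w‖) :
    ‖(F.natDegree : ℂ) * F.eval w - w * F.derivative.eval w‖ = ‖w * F.derivative.eval w‖ := by
  by_cases hw : F.eval w = 0
  · simp [hw]
  rw [← sq_eq_sq₀ (norm_nonneg _) (norm_nonneg _), norm_natDegree_mul_eval_sub_sq F hw,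
    Multiset.sum_eq_zero, mul_zero, sub_zero]
  intro x hx
  obtain ⟨r, hr, rfl⟩ := Multiset.mem_map.mp hx
  simp [hroots r hr]

theorem eval_add_C_mul_X_pow_ne_zero {P : ℂ[X]} {n : ℕ} (hP : P.natDegree ≤ n) {γ : ℂ}
    (hγ : polyMax P 1 < ‖γ‖) {u : ℂ} (hu : 1 ≤ ‖u‖) : (P + C γ * X ^ n).eval u ≠ 0 := by
  rw [eval_add, eval_mul, eval_C, eval_pow, eval_X]
  intro h
  rw [add_eq_zero_iff_eq_neg] at h
  have hle : ‖u‖ ^ n * ‖γ‖ ≤ ‖u‖ ^ n * polyMax P 1 := by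
    simpa [h, norm_mul, mul_comm] using norm_eval_le_pow_mul_polyMax_one hP hu
  exact (mul_lt_mul_of_pos_left hγ (pow_pos (one_pos.trans_le hu) n)).not_ge hle

theorem natDegree_add_C_mul_X_pow {P : ℂ[X]} {n : ℕ} (hP : P.natDegree ≤ n) {γ : ℂ}
    (hγ : polyMax P 1 < ‖γ‖) : (P + C γ * X ^ n).natDegree = n := by
  refine natDegree_eq_of_le_of_coeff_ne_zero
    ((natDegree_add_le _ _).trans (max_le hP (natDegree_C_mul_X_pow_le γ n))) fun h => ?_
  rw [coeff_add, coeff_C_mul_X_pow, if_pos rfl] at h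
  have := norm_coeff_le_polyMax hP
  rw [eq_neg_of_add_eq_zero_left h, norm_neg] at this
  linarith

theorem norm_eval_derivative_le_norm_add {P : ℂ[X]} (hroots : ∀ r ∈ P.roots, ‖r‖ = 1)
    (hn : P.natDegree ≠ 0) {w : ℂ} (hw : ‖w‖ = 1) {γ : ℂ} (hγ : polyMax P 1 < ‖γ‖) :
    ‖P.derivative.eval w‖ ≤
      ‖P.derivative.eval w + P.natDegree * γ * w ^ (P.natDegree - 1)‖ := by
  set n := P.natDegree
  set F := P + C γ * X ^ n
  have hFroots : ∀ r ∈ F.roots, ‖r‖ ≤ ‖w‖ := fun r hr => hw ▸ le_of_not_gt fun h =>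
    eval_add_C_mul_X_pow_ne_zero le_rfl hγ h.le (isRoot_of_mem_roots hr)
  have hF' : F.derivative.eval w = P.derivative.eval w + n * γ * w ^ (n - 1) := by
    simp [F, derivative_X_pow]
    ring
  have hcancel : (n : ℂ) * F.eval w - w * F.derivative.eval w =
      n * P.eval w - w * P.derivative.eval w := by
    rw [hF']
    simp only [F, eval_add, eval_mul, eval_C, eval_pow, eval_X]
    rw [← mul_pow_sub_one hn w]
    ring
  have := norm_natDegree_mul_eval_sub_le F hFroots (eval_add_C_mul_X_pow_ne_zero le_rfl hγ hw.ge)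
  rwa [natDegree_add_C_mul_X_pow le_rfl hγ, hcancel,
    norm_natDegree_mul_eval_sub_eq P fun r hr => (hroots r hr).trans hw.symm, norm_mul, norm_mul,
    hw, one_mul, one_mul, hF'] at this

theorem norm_eval_derivative_le_of_roots_norm_eq_one (P : ℂ[X])
    (hroots : ∀ z : ℂ, P.eval z = 0 → ‖z‖ = 1) {w : ℂ} (hw : ‖w‖ = 1) :
    ‖P.derivative.eval w‖ ≤ P.natDegree / 2 * polyMax P 1 := by
  set n := P.natDegree
  set M := polyMax P 1
  set A := P.derivative.eval w
  by_contra! hA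
  have hn : n ≠ 0 := fun h => by simp [A, n, h, derivative_of_natDegree_zero h] at hA
  have hM : 0 ≤ M := (norm_nonneg _).trans (norm_eval_le_polyMax P hw)
  have hA0 : 0 < ‖A‖ := (by positivity : 0 ≤ (n : ℝ) / 2 * M).trans_lt hA
  have hw0 : w ≠ 0 := norm_ne_zero_iff.mp (hw ▸ one_ne_zero)
  -- `s` lies strictly between `n * M` and `2 * ‖A‖`
  set s := ‖A‖ + n * M / 2 with hs
  have hs0 : 0 < s := by positivity
  set γ : ℂ := -(s / ‖A‖ / n / w ^ (n - 1) : ℂ) * A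
  have hγ : ‖γ‖ = s / n := by
    simp [γ, hw, abs_of_pos hs0]
    field_simp
  have hsum : A + n * γ * w ^ (n - 1) = ((1 - s / ‖A‖ : ℝ) : ℂ) * A := by
    simp [γ]
    field_simp
    ring
  have key := norm_eval_derivative_le_norm_add (fun r hr => hroots r (isRoot_of_mem_roots hr)) hn hw
    (γ := γ) (show M < ‖γ‖ by rw [hγ, lt_div_iff₀ (by positivity)]; linarith)
  have hcoeff : 1 - s / ‖A‖ = -(n * M / 2 / ‖A‖) := by
    rw [hs]
    field_simp
    ring
  rw [hsum, norm_mul, norm_real, hcoeff, norm_neg, Real.norm_of_nonneg (by positivity),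
    div_mul_cancel₀ _ hA0.ne'] at key
  linarith

theorem norm_eval_derivative_le_of_roots_norm_eq (p : ℂ[X]) {K : ℝ} (hK : 0 < K)
    (hroots : ∀ z : ℂ, p.eval z = 0 → ‖z‖ = K) {ζ : ℂ} (hζ : ‖ζ‖ = K) :
    ‖p.derivative.eval ζ‖ ≤ p.natDegree / (2 * K) * polyMax p K := by
  have hK' : (K : ℂ) ≠ 0 := by exact_mod_cast hK.ne'
  set P := p.comp (C (K : ℂ) * X)
  have hP : P.natDegree = p.natDegree := by rw [natDegree_comp, natDegree_C_mul_X _ hK', mul_one]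
  have hProots (z : ℂ) (hz : P.eval z = 0) : ‖z‖ = 1 := by
    have := hroots _ (by simpa [P] using hz)
    simpa [abs_of_pos hK, hK.ne'] using this
  have hP' : P.derivative.eval (ζ / K) = K * p.derivative.eval ζ := by
    simp [P, derivative_comp, mul_div_cancel₀ _ hK']
  have hLax := norm_eval_derivative_le_of_roots_norm_eq_one P hProots
    (by simp [hζ, abs_of_pos hK, hK.ne'] : ‖ζ / K‖ = 1)
  rw [hP', norm_mul, norm_real, Real.norm_of_nonneg hK.le, hP] at hLax
  have := polyMax_comp_C_mul_X_le p hK.le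
  rw [div_mul_eq_mul_div, le_div_iff₀ (by positivity)]
  nlinarith

theorem norm_eval_derivative_le_of_roots_norm_eq_of_le_one (p : ℂ[X]) (hp : 0 < p.natDegree)
    {K : ℝ} (hK0 : 0 < K) (hK1 : K ≤ 1) (hroots : ∀ z : ℂ, p.eval z = 0 → ‖z‖ = K) {z : ℂ}
    (hz : ‖z‖ = 1) :
    ‖p.derivative.eval z‖ ≤ p.natDegree / (K ^ (p.natDegree - 1) * (1 + K)) * polyMax p 1 := by
  set n := p.natDegree
  calc ‖p.derivative.eval z‖ ≤ (‖z‖ / K) ^ (n - 1) * polyMax p.derivative K :=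
        norm_eval_le_pow_mul_polyMax (natDegree_derivative_le p) hK0 (hz ▸ hK1)
    _ ≤ (1 / K) ^ (n - 1) * (n / (2 * K) * polyMax p K) := by
        rw [hz]
        gcongr
        exact polyMax_le _ hK0.le fun ζ hζ =>
          norm_eval_derivative_le_of_roots_norm_eq p hK0 hroots hζ
    _ ≤ (1 / K) ^ (n - 1) * (n / (2 * K) * (2 * K / (1 + K) * polyMax p 1)) := by
        gcongr
        exact polyMax_le_two_mul_div_one_add_mul_polyMax_one p hp hK0 hK1 hroots
    _ = n / (K ^ (n - 1) * (1 + K)) * polyMax p 1 := by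
        rw [one_div, inv_pow]
        field_simp

theorem norm_eval_le_polyMax_one_add {p : ℂ[X]} {n : ℕ} (hn : n ≠ 0) {c : ℝ}
    (hderiv : ∀ w : ℂ, 1 ≤ ‖w‖ → ‖p.derivative.eval w‖ ≤ c * ‖w‖ ^ (n - 1)) {z : ℂ}
    (hz : 1 ≤ ‖z‖) : ‖p.eval z‖ ≤ polyMax p 1 + c * (‖z‖ ^ n - 1) / n := by
  have hz0 : z ≠ 0 := norm_pos_iff.mp (one_pos.trans_le hz)
  set u := z / ‖z‖
  have hu : ‖u‖ = 1 := by simp [u, hz0]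
  have hf (t : ℝ) :
      HasDerivAt (fun s : ℝ => p.eval (s * u)) (p.derivative.eval (t * u) * u) t := by
    have := (p.hasDerivAt (t * u)).comp (t : ℂ) ((hasDerivAt_id (t : ℂ)).mul_const u)
    simpa using this.comp_ofReal
  have hB (t : ℝ) : HasDerivAt (fun s : ℝ => polyMax p 1 + c * (s ^ n - 1) / n)
      (c * t ^ (n - 1)) t := by
    have hn' : (n : ℝ) ≠ 0 := by exact_mod_cast hn
    exact (((hasDerivAt_pow n t).sub_const 1).const_mul c).div_const (n : ℝ)
      |>.const_add (polyMax p 1) |>.congr_deriv (by field_simp)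
  have := image_norm_le_of_norm_deriv_right_le_deriv_boundary
    (fun t _ => (hf t).continuousAt.continuousWithinAt) (fun t _ => (hf t).hasDerivWithinAt)
    (by simpa using norm_eval_le_polyMax p hu) hB
    (fun t ht => by
      have ht0 : 0 ≤ t := zero_le_one.trans ht.1
      simpa [hu, abs_of_nonneg ht0] using
        hderiv (t * u) (by simpa [hu, abs_of_nonneg ht0] using ht.1))
    (Set.right_mem_Icc.mpr hz)
  rwa [mul_div_cancel₀ _ (by simpa using hz0 : (‖z‖ : ℂ) ≠ 0)] at this

theorem dewan_ahuja_s_one (p : Polynomial ℂ) (n : ℕ) (hn : 1 ≤ n)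
    (hdeg : p.natDegree = n) (K : ℝ) (hK0 : 0 < K) (hK1 : K ≤ 1)
    (hroots : ∀ z : ℂ, p.eval z = 0 → ‖z‖ = K)
    (R : ℝ) (hR : 1 ≤ R) :
    polyMax p R ≤
      ((K ^ (n - 1) * (1 + K) + (R ^ n - 1)) / (K ^ (n - 1) + K ^ n)) *
        polyMax p 1 := by
  subst hdeg
  have hn0 : p.natDegree ≠ 0 := by omega
  set M := polyMax p 1
  set c := p.natDegree / (K ^ (p.natDegree - 1) * (1 + K)) * M with hc
  have hderiv (w : ℂ) (hw : 1 ≤ ‖w‖) :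
      ‖p.derivative.eval w‖ ≤ c * ‖w‖ ^ (p.natDegree - 1) := by
    rw [mul_comm c]
    calc ‖p.derivative.eval w‖ ≤ ‖w‖ ^ (p.natDegree - 1) * polyMax p.derivative 1 :=
          norm_eval_le_pow_mul_polyMax_one (natDegree_derivative_le p) hw
      _ ≤ ‖w‖ ^ (p.natDegree - 1) * c := by
          gcongr
          exact polyMax_le _ zero_le_one fun z hz =>
            norm_eval_derivative_le_of_roots_norm_eq_of_le_one p hn hK0 hK1 hroots hz
  calc polyMax p R ≤ M + c * (R ^ p.natDegree - 1) / p.natDegree :=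
        polyMax_le p (zero_le_one.trans hR) fun z hz => by
          simpa [hz] using norm_eval_le_polyMax_one_add hn0 hderiv (z := z) (hz ▸ hR)
    _ = _ := by
        rw [hc, ← mul_pow_sub_one hn0 K]
        field_simp
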